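/- arXiv:1901.01090 — 2 statements merged into one kernel-verified Lean document; each statement's English description precedes it below -/
import Mathlib

section
/- Let G be a finite simple graph with at least one vertex. Then sup_{n ≥ 1} (ω(G^{*n}))^{1/n} = inf { η(G) : η is a semiring-homomorphic graph invariant }, where ω denotes the clique number and G^{*n} the n-fold disjunctive product of G with itself. (The left-hand side is the complementary Shannon capacity Θ(Ḡ).) -/
/-!
Finite graphs up to homomorphic equivalence form a commutative semiring under join and disjunctive
product, partially ordered by the existence of homomorphisms, and semiring-homomorphic invariants
are exactly its monotone ring homomorphisms to `ℝ`. Since `K_{ω(H)} → H`, every such `η` has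
`ω(G^{*n}) ≤ η(G^{*n}) = η(G)^n`.

Conversely, let `θ` be the supremum and `θ < a / b`. Strassen's extension of the homomorphism order
by `b * G ≤ a` still orders the naturals correctly: an inequality `p + c * a ≤ q + c * b * G` with
`p > q`, telescoped `t` times and measured by the clique number (additive and monotone), would give
`a ^ t ≤ N * (b * θ) ^ (t + 1)` for all `t`, where `c ≤ N`. By Zorn's lemma the extension lies in a total such
preorder, and comparing elements with fractions turns a total one into a monotone ring
homomorphism `φ` to `ℝ`; it has `b * φ G ≤ a`.
-/

open SimpleGraph

universe u v

/-- The join `G + H` of two simple graphs. -/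
def graphJoin {α : Type u} {β : Type v} (G : SimpleGraph α) (H : SimpleGraph β) :
    SimpleGraph (α ⊕ β) where
  Adj x y :=
    match x, y with
    | Sum.inl a, Sum.inl a' => G.Adj a a'
    | Sum.inr b, Sum.inr b' => H.Adj b b'
    | Sum.inl _, Sum.inr _ => True
    | Sum.inr _, Sum.inl _ => True
  symm := by
    refine ⟨?_⟩
    rintro (a | b) (a' | b') h
    · exact G.adj_symm h
    · trivial
    · trivial
    · exact H.adj_symm h
  loopless := by
    refine ⟨?_⟩
    rintro (a | b) h
    · exact G.loopless.irrefl a h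
    · exact H.loopless.irrefl b h

/-- The disjunctive product `G * H`. -/
def disjProd {α : Type u} {β : Type v} (G : SimpleGraph α) (H : SimpleGraph β) :
    SimpleGraph (α × β) where
  Adj p q := G.Adj p.1 q.1 ∨ H.Adj p.2 q.2
  symm := ⟨fun p q h => h.imp (fun h' => G.adj_symm h') (fun h' => H.adj_symm h')⟩
  loopless := ⟨fun p h => h.elim (fun h' => G.loopless.irrefl p.1 h') (fun h' => H.loopless.irrefl p.2 h')⟩

/-- The lexicographic product `G ⋉ H`. -/
def lexProd {α : Type u} {β : Type v} (G : SimpleGraph α) (H : SimpleGraph β) :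
    SimpleGraph (α × β) where
  Adj p q := G.Adj p.1 q.1 ∨ (p.1 = q.1 ∧ H.Adj p.2 q.2)
  symm := ⟨fun p q h => h.imp (fun h' => G.adj_symm h') (fun h' => ⟨h'.1.symm, H.adj_symm h'.2⟩)⟩
  loopless := ⟨fun p h => h.elim (fun h' => G.loopless.irrefl p.1 h') (fun h' => H.loopless.irrefl p.2 h'.2)⟩

/-- The `d`-fold blowup `G ⋉ d`, i.e. the lexicographic product `G ⋉ K_d`. -/
def blowup {α : Type u} (G : SimpleGraph α) (d : ℕ) : SimpleGraph (α × Fin d) :=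
  lexProd G (⊤ : SimpleGraph (Fin d))

/-- The `d`-fractionalization `G/d`: the graph of `d`-cliques of `G`, with two
`d`-cliques adjacent iff they are disjoint and pairwise adjacent. -/
def fracGraph {α : Type u} (G : SimpleGraph α) (d : ℕ) :
    SimpleGraph {S : Finset α // S.card = d ∧ G.IsClique (S : Set α)} where
  Adj S T := S ≠ T ∧ Disjoint S.val T.val ∧ ∀ a ∈ S.val, ∀ b ∈ T.val, G.Adj a b
  symm := by
    refine ⟨?_⟩
    rintro S T ⟨hne, hd, hadj⟩
    exact ⟨hne.symm, hd.symm, fun b hb a ha => (hadj a ha b hb).symm⟩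
  loopless := ⟨fun S h => h.1 rfl⟩

/-- The `n`-fold disjunctive power `G^{*n}`. -/
def disjPow {α : Type u} (G : SimpleGraph α) (n : ℕ) :
    SimpleGraph (Fin n → α) where
  Adj f g := ∃ i, G.Adj (f i) (g i)
  symm := ⟨fun f g ⟨i, h⟩ => ⟨i, h.symm⟩⟩
  loopless := ⟨fun f ⟨i, h⟩ => G.loopless.irrefl _ h⟩

/-- A semiring family of graphs. -/
structure SemiringFamily where
  V : ℕ → Type u
  F : ∀ n, SimpleGraph (V n)
  isEmpty_zero : IsEmpty (V 0)
  nonempty_one : Nonempty (V 1)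
  add_hom : ∀ n m : ℕ, Nonempty (graphJoin (F n) (F m) →g F (n + m))
  mul_hom : ∀ n m : ℕ, Nonempty (disjProd (F n) (F m) →g F (n * m))

/-- The `F`-number: the least `n` such that `G → F_n`. -/
noncomputable def etaF (F : SemiringFamily.{u}) {α : Type v} (G : SimpleGraph α) : ℕ :=
  sInf {n : ℕ | Nonempty (G →g F.F n)}

/-- The fractional `F`-number. -/
noncomputable def etaFrac (F : SemiringFamily.{u}) {α : Type v} (G : SimpleGraph α) : ℝ :=
  sInf {x : ℝ | ∃ n d : ℕ, 1 ≤ d ∧ Nonempty (G →g fracGraph (F.F n) d) ∧ x = (n : ℝ) / d}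

/-- The asymptotic `F`-number. -/
noncomputable def etaAsymp (F : SemiringFamily.{u}) {α : Type v} (G : SimpleGraph α) : ℝ :=
  sInf {x : ℝ | ∃ n : ℕ, 1 ≤ n ∧ x = (etaF F (disjPow G n) : ℝ) ^ ((1 : ℝ) / n)}

/-- The orthogonal complement of a set of vertices. -/
def perp {α : Type u} (G : SimpleGraph α) (S : Set α) : Set α :=
  {v | ∀ s ∈ S, G.Adj v s}

/-- A flat is a set of vertices with `S^{⊥⊥} = S`. -/
def IsFlat {α : Type u} (G : SimpleGraph α) (S : Set α) : Prop :=
  perp G (perp G S) = S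

/-- Homomorphic equivalence of two graphs. -/
def HomEquiv {α : Type u} {β : Type v} (G : SimpleGraph α) (H : SimpleGraph β) : Prop :=
  Nonempty (G →g H) ∧ Nonempty (H →g G)

/-- A linear-like semiring family: every flat of `F_n` induces a subgraph with some
clique number `k`, homomorphically equivalent to `F_k`. -/
structure LinearLikeFamily extends SemiringFamily where
  linearLike : ∀ n (S : Set (V n)), IsFlat (F n) S →
    ∃ k : ℕ, (∃ s : Finset S, ((F n).induce S).IsNClique k s) ∧
      (∀ s : Finset S, ¬ ((F n).induce S).IsNClique (k + 1) s) ∧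
      HomEquiv ((F n).induce S) (F k)

/-- A semiring-homomorphic graph invariant: a real-valued invariant of finite simple
graphs, normalized on `K_1`, monotone under graph homomorphisms, additive under
joins, and multiplicative under disjunctive products. -/
structure SRInvariant where
  eta : ∀ {V : Type} [Fintype V], SimpleGraph V → ℝ
  eta_one : eta (⊤ : SimpleGraph (Fin 1)) = 1
  eta_mono : ∀ {V W : Type} [Fintype V] [Fintype W] (G : SimpleGraph V) (H : SimpleGraph W),
    Nonempty (G →g H) → eta G ≤ eta H
  eta_add : ∀ {V W : Type} [Fintype V] [Fintype W] (G : SimpleGraph V) (H : SimpleGraph W),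
    eta (graphJoin G H) = eta G + eta H
  eta_mul : ∀ {V W : Type} [Fintype V] [Fintype W] (G : SimpleGraph V) (H : SimpleGraph W),
    eta (disjProd G H) = eta G * eta H

lemma exists_natCast_div_mem_Ioo {x y : ℝ} (hx : 0 ≤ x) (hxy : x < y) :
    ∃ a b : ℕ, 0 < b ∧ x < a / b ∧ (a : ℝ) / b < y := by
  obtain ⟨q, hxq, hqy⟩ := exists_rat_btwn hxy
  have hq : (0 : ℚ) ≤ q := by exact_mod_cast hx.trans hxq.le
  have hcast : ((q.num.toNat : ℕ) : ℝ) / q.den = q := by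
    rw [← Int.cast_natCast, Int.toNat_of_nonneg (Rat.num_nonneg.mpr hq), Rat.cast_def]
  exact ⟨q.num.toNat, q.den, q.pos, hcast ▸ hxq, hcast ▸ hqy⟩

lemma exists_mul_pow_lt_pow (C : ℝ) {ρ m : ℝ} (hρ : 0 ≤ ρ) (hρm : ρ < m) :
    ∃ t : ℕ, C * ρ ^ t < m ^ t := by
  rcases hρ.eq_or_lt with rfl | hρ
  · exact ⟨1, by simpa using hρm⟩
  obtain ⟨t, ht⟩ := pow_unbounded_of_one_lt C ((one_lt_div hρ).2 hρm)
  exact ⟨t, by rwa [div_pow, lt_div_iff₀ (by positivity)] at ht⟩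

section StrassenPreorder

variable {R : Type*} [CommSemiring R] {r : R → R → Prop}

structure IsSemiringPreorder (r : R → R → Prop) : Prop where
  refl : ∀ x, r x x
  trans : ∀ {x y z}, r x y → r y z → r x z
  add_right : ∀ {x y} (z), r x y → r (x + z) (y + z)
  mul_right : ∀ {x y} (z), r x y → r (x * z) (y * z)

/-- Strassen's one-step extension of `r` by the relation `a ≤ b`. -/
def adjoin (r : R → R → Prop) (a b : R) : R → R → Prop :=
  fun x y => ∃ c, r (x + c * b) (y + c * a)

lemma le_adjoin (a b : R) ⦃x y : R⦄ (h : r x y) : adjoin r a b x y :=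
  ⟨0, by simpa using h⟩

namespace IsSemiringPreorder

variable {x y u v : R}

lemma of_eq (hr : IsSemiringPreorder r) (h : x = y) : r x y := h ▸ hr.refl x

lemma add (hr : IsSemiringPreorder r) (h : r x y) (h' : r u v) : r (x + u) (y + v) :=
  hr.trans (hr.add_right u h) (by simpa only [add_comm y] using hr.add_right y h')

lemma mul (hr : IsSemiringPreorder r) (h : r x y) (h' : r u v) : r (x * u) (y * v) :=
  hr.trans (hr.mul_right u h) (by simpa only [mul_comm y] using hr.mul_right y h')

lemma flip (hr : IsSemiringPreorder r) : IsSemiringPreorder (flip r) :=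
  ⟨hr.refl, fun h h' => hr.trans h' h, fun z h => hr.add_right z h, fun z h => hr.mul_right z h⟩

/-- Multiplying `hc` by `m ^ (t - i) * h ^ i` and summing over `i ≤ t` telescopes the
`c`-terms. -/
lemma telescope (hr : IsSemiringPreorder r) {p q c m h : R} (hc : r (p + c * m) (q + c * h))
    (t : ℕ) : ∃ T J : R, r (p * (m ^ t + T) + c * m ^ (t + 1) + J)
      (q * (m ^ t + T) + c * h ^ (t + 1) + J) := by
  induction t with
  | zero => exact ⟨0, 0, by simpa using hc⟩
  | succ t ih =>
    obtain ⟨T, J, hTJ⟩ := ih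
    refine ⟨T * m + h ^ (t + 1), J * m + c * m * h ^ (t + 1), ?_⟩
    refine hr.trans (hr.of_eq ?_) (hr.trans (hr.add (hr.mul_right m hTJ)
      (hr.mul_right (h ^ (t + 1)) hc)) (hr.of_eq ?_)) <;> ring

lemma adjoin_self (hr : IsSemiringPreorder r) (a b : R) : adjoin r a b a b :=
  ⟨1, hr.of_eq (by ring)⟩

lemma adjoin (hr : IsSemiringPreorder r) (a b : R) : IsSemiringPreorder (adjoin r a b) where
  refl x := le_adjoin a b (hr.refl x)
  trans := by
    rintro x y z ⟨c, hc⟩ ⟨d, hd⟩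
    refine ⟨c + d, hr.trans (hr.of_eq ?_) (hr.trans (hr.add_right (d * b) hc)
      (hr.trans (hr.of_eq ?_) (hr.trans (hr.add_right (c * a) hd) (hr.of_eq ?_))))⟩ <;> ring
  add_right := by
    rintro x y z ⟨c, hc⟩
    exact ⟨c, hr.trans (hr.of_eq (by ring)) (hr.trans (hr.add_right z hc) (hr.of_eq (by ring)))⟩
  mul_right := by
    rintro x y z ⟨c, hc⟩
    exact ⟨c * z, hr.trans (hr.of_eq (by ring))
      (hr.trans (hr.mul_right z hc) (hr.of_eq (by ring)))⟩

end IsSemiringPreorder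

/-- Strassen's axioms with the Archimedean one strengthened: Strassen asks only for
`a ≤ n * b` whenever `b ≠ 0`. -/
structure IsStrassenPreorder (r : R → R → Prop) : Prop extends IsSemiringPreorder r where
  zero_le : ∀ x, r 0 x
  one_le : ∀ {x}, x ≠ 0 → r 1 x
  exists_le_natCast : ∀ x, ∃ n : ℕ, r x n
  le_of_natCast : ∀ {m n : ℕ}, r m n → m ≤ n

namespace IsStrassenPreorder

lemma of_le {s : R → R → Prop} (hr : IsStrassenPreorder r) (hs : IsSemiringPreorder s)
    (hrs : ∀ ⦃x y⦄, r x y → s x y) (hnat : ∀ {m n : ℕ}, s m n → m ≤ n) :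
    IsStrassenPreorder s :=
  { hs with
    zero_le := fun x => hrs (hr.zero_le x)
    one_le := fun hx => hrs (hr.one_le hx)
    exists_le_natCast := fun x => (hr.exists_le_natCast x).imp fun _ h => hrs h
    le_of_natCast := hnat }

lemma natCast_le_natCast (hr : IsStrassenPreorder r) {m n : ℕ} (h : m ≤ n) :
    r (m : R) (n : R) := by
  obtain ⟨k, rfl⟩ := Nat.exists_eq_add_of_le h
  simpa [add_comm] using hr.add_right (m : R) (hr.zero_le (k : R))

lemma not_add_le_self (hr : IsStrassenPreorder r) {u w : R} (hw : r 1 w) : ¬ r (u + w) u := by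
  intro h
  have hiter : ∀ k : ℕ, r (u + k * w) u := by
    intro k
    induction k with
    | zero => simpa using hr.refl u
    | succ k ih =>
      exact hr.trans (hr.of_eq (by push_cast; ring)) (hr.trans (hr.add_right w ih) h)
  obtain ⟨N, hN⟩ := hr.exists_le_natCast u
  have hk : r ((N + 1 : ℕ) : R) (u + (N + 1 : ℕ) * w) :=
    hr.trans (hr.of_eq (by ring)) <| hr.trans (hr.mul_right ((N + 1 : ℕ) : R) hw) <|
      hr.trans (hr.of_eq (by ring)) (hr.add_right _ (hr.zero_le u))
  exact absurd (hr.le_of_natCast (hr.trans hk (hr.trans (hiter (N + 1)) hN))) (by omega)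

lemma isStrassenPreorder_adjoin_or (hr : IsStrassenPreorder r) (a b : R) :
    IsStrassenPreorder (adjoin r a b) ∨ ∃ (q : ℕ) (c : R), r (q + 1 + c * b) (q + c * a) := by
  by_cases hnat : ∀ {m n : ℕ}, adjoin r a b m n → m ≤ n
  · exact .inl (hr.of_le (hr.adjoin a b) (le_adjoin a b) hnat)
  push Not at hnat
  obtain ⟨m, n, ⟨c, hc⟩, hnm⟩ := hnat
  refine .inr ⟨n, c, hr.trans (hr.add_right _ ?_) hc⟩
  exact_mod_cast hr.natCast_le_natCast hnm

lemma total_of_maximal (hr : IsStrassenPreorder r)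
    (hmax : ∀ s, IsStrassenPreorder s → (∀ ⦃x y⦄, r x y → s x y) → ∀ ⦃x y⦄, s x y → r x y)
    (x y : R) : r x y ∨ r y x := by
  by_contra! hxy
  have key : ∀ a b, ¬ r a b → ∃ (q : ℕ) (c : R), c ≠ 0 ∧ r (q + 1 + c * b) (q + c * a) := by
    intro a b hab
    rcases hr.isStrassenPreorder_adjoin_or a b with hs | ⟨q, c, hc⟩
    · exact absurd (hmax _ hs (le_adjoin a b) (hr.adjoin_self a b)) hab
    refine ⟨q, c, ?_, hc⟩
    rintro rfl
    exact absurd (hr.le_of_natCast (m := q + 1) (n := q) (by simpa using hc)) (by omega)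
  obtain ⟨q, c, hc0, hc⟩ := key x y hxy.1
  obtain ⟨q', d, -, hd⟩ := key y x hxy.2
  have hw : r 1 (c + d) := by simpa using hr.add (hr.one_le hc0) (hr.zero_le d)
  refine hr.not_add_le_self hw (u := q * d + q' * c + c * d * (x + y)) ?_
  exact hr.trans (hr.of_eq (by ring))
    (hr.trans (hr.add (hr.mul_right d hc) (hr.mul_right c hd)) (hr.of_eq (by ring)))

lemma exists_total (hr : IsStrassenPreorder r) :
    ∃ s, IsStrassenPreorder s ∧ (∀ ⦃x y⦄, r x y → s x y) ∧ ∀ x y, s x y ∨ s y x := by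
  obtain ⟨s, hrs, hmax⟩ := zorn_le_nonempty₀ {s | IsStrassenPreorder s}
    (fun c hc hchain s₀ hs₀ => by
      let ub : R → R → Prop := fun x y => ∃ s ∈ c, s x y
      have hub : IsSemiringPreorder ub :=
        { refl := fun x => ⟨s₀, hs₀, (hc hs₀).refl x⟩
          trans := by
            rintro x y z ⟨s, hs, hxy⟩ ⟨s', hs', hyz⟩
            rcases hchain.total hs hs' with h | h
            · exact ⟨s', hs', (hc hs').trans (h _ _ hxy) hyz⟩
            · exact ⟨s, hs, (hc hs).trans hxy (h _ _ hyz)⟩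
          add_right := fun z ⟨s, hs, h⟩ => ⟨s, hs, (hc hs).add_right z h⟩
          mul_right := fun z ⟨s, hs, h⟩ => ⟨s, hs, (hc hs).mul_right z h⟩ }
      refine ⟨ub, (hc hs₀).of_le hub (fun x y h => ⟨s₀, hs₀, h⟩) ?_, fun s hs x y h => ⟨s, hs, h⟩⟩
      rintro m n ⟨s, hs, h⟩
      exact (hc hs).le_of_natCast h) r hr
  exact ⟨s, hmax.prop, hrs, hmax.prop.total_of_maximal
    fun s' hs' hss' => hmax.le_of_ge hs' (fun x y h => hss' h)⟩

end IsStrassenPreorder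

def upperRatios (r : R → R → Prop) (x : R) : Set ℝ :=
  {t | ∃ a b : ℕ, 0 < b ∧ r (b * x) a ∧ t = a / b}

abbrev lowerRatios (r : R → R → Prop) (x : R) : Set ℝ := upperRatios (flip r) x

lemma nonneg_of_mem_upperRatios {x : R} {t : ℝ} (ht : t ∈ upperRatios r x) : 0 ≤ t := by
  obtain ⟨a, b, -, -, rfl⟩ := ht
  positivity

lemma bddBelow_upperRatios (x : R) : BddBelow (upperRatios r x) :=
  ⟨0, fun _ => nonneg_of_mem_upperRatios⟩

noncomputable def realValue (r : R → R → Prop) (x : R) : ℝ := sInf (upperRatios r x)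

lemma realValue_le {x : R} {t : ℝ} (ht : t ∈ upperRatios r x) : realValue r x ≤ t :=
  csInf_le (bddBelow_upperRatios x) ht

namespace IsSemiringPreorder

variable {x y : R} {t u : ℝ}

lemma add_mem_upperRatios (hr : IsSemiringPreorder r) (ht : t ∈ upperRatios r x)
    (hu : u ∈ upperRatios r y) : t + u ∈ upperRatios r (x + y) := by
  obtain ⟨a, b, hb, hab, rfl⟩ := ht
  obtain ⟨a', b', hb', hab', rfl⟩ := hu
  refine ⟨a * b' + a' * b, b * b', by positivity, ?_, by field_simp; push_cast; ring⟩
  exact hr.trans (hr.of_eq (by push_cast; ring)) (hr.trans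
    (hr.add (hr.mul_right b' hab) (hr.mul_right b hab')) (hr.of_eq (by push_cast; ring)))

lemma mul_mem_upperRatios (hr : IsSemiringPreorder r) (ht : t ∈ upperRatios r x)
    (hu : u ∈ upperRatios r y) : t * u ∈ upperRatios r (x * y) := by
  obtain ⟨a, b, hb, hab, rfl⟩ := ht
  obtain ⟨a', b', hb', hab', rfl⟩ := hu
  refine ⟨a * a', b * b', by positivity, ?_, by push_cast; ring⟩
  exact hr.trans (hr.of_eq (by push_cast; ring))
    (hr.trans (hr.mul hab hab') (hr.of_eq (Nat.cast_mul a a').symm))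

end IsSemiringPreorder

namespace IsStrassenPreorder

variable {x y : R}

lemma upperRatios_nonempty (hr : IsStrassenPreorder r) (x : R) : (upperRatios r x).Nonempty := by
  obtain ⟨n, hn⟩ := hr.exists_le_natCast x
  exact ⟨n, n, 1, one_pos, by simpa using hn, by simp⟩

lemma zero_mem_lowerRatios (hr : IsStrassenPreorder r) (x : R) : 0 ∈ lowerRatios r x :=
  ⟨0, 1, one_pos, by simpa [flip] using hr.zero_le x, by simp⟩

lemma le_of_mem_lowerRatios_of_mem_upperRatios (hr : IsStrassenPreorder r) {t u : ℝ}
    (ht : t ∈ lowerRatios r x) (hu : u ∈ upperRatios r x) : t ≤ u := by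
  obtain ⟨a, b, hb, hab, rfl⟩ := ht
  obtain ⟨a', b', hb', hab', rfl⟩ := hu
  rw [div_le_div_iff₀ (by positivity) (by positivity)]
  exact_mod_cast hr.le_of_natCast <| hr.trans (hr.of_eq (by push_cast; ring)) <|
    hr.trans (hr.mul_right b' hab) <| hr.trans (hr.of_eq (by ring)) <|
      hr.trans (hr.mul_right b hab') (hr.of_eq (by push_cast; ring))

lemma bddAbove_lowerRatios (hr : IsStrassenPreorder r) (x : R) :
    BddAbove (lowerRatios r x) :=
  (hr.upperRatios_nonempty x).imp fun _ hu _ ht =>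
    hr.le_of_mem_lowerRatios_of_mem_upperRatios ht hu

lemma le_realValue (hr : IsStrassenPreorder r) {t : ℝ} (ht : t ∈ lowerRatios r x) :
    t ≤ realValue r x :=
  le_csInf (hr.upperRatios_nonempty x) fun _ hu =>
    hr.le_of_mem_lowerRatios_of_mem_upperRatios ht hu

lemma realValue_nonneg (hr : IsStrassenPreorder r) (x : R) : 0 ≤ realValue r x :=
  hr.le_realValue (hr.zero_mem_lowerRatios x)

lemma realValue_natCast (hr : IsStrassenPreorder r) (n : ℕ) : realValue r n = n :=
  le_antisymm (realValue_le ⟨n, 1, one_pos, by simpa using hr.refl (n : R), by simp⟩)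
    (hr.le_realValue ⟨n, 1, one_pos, by simpa [flip] using hr.refl (n : R), by simp⟩)

lemma realValue_mono (hr : IsStrassenPreorder r) (h : r x y) : realValue r x ≤ realValue r y :=
  csInf_le_csInf (bddBelow_upperRatios x) (hr.upperRatios_nonempty y)
    fun _ ⟨a, b, hb, hab, ht⟩ =>
      ⟨a, b, hb, hr.trans (by simpa only [mul_comm (b : R)] using hr.mul_right (b : R) h) hab, ht⟩

/-- Totality puts every fraction on one side of `x`, so the two cuts meet. -/
lemma realValue_eq_sSup_lowerRatios (hr : IsStrassenPreorder r) (htot : ∀ x y, r x y ∨ r y x)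
    (x : R) : realValue r x = sSup (lowerRatios r x) := by
  refine (csSup_eq_of_forall_le_of_forall_lt_exists_gt ⟨0, hr.zero_mem_lowerRatios x⟩
    (fun _ => hr.le_realValue) fun w hw => ?_).symm
  rcases lt_or_ge w 0 with hw0 | hw0
  · exact ⟨0, hr.zero_mem_lowerRatios x, hw0⟩
  obtain ⟨a, b, hb, hwab, habx⟩ := exists_natCast_div_mem_Ioo hw0 hw
  rcases htot (b * x) a with h | h
  · exact absurd (realValue_le ⟨a, b, hb, h, rfl⟩) habx.not_ge
  · exact ⟨a / b, ⟨a, b, hb, h, rfl⟩, hwab⟩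

lemma realValue_add (hr : IsStrassenPreorder r) (htot : ∀ x y, r x y ∨ r y x) (x y : R) :
    realValue r (x + y) = realValue r x + realValue r y := by
  refine le_antisymm ?_ ?_
  · rw [realValue, realValue, realValue, ← csInf_add (hr.upperRatios_nonempty x)
      (bddBelow_upperRatios x) (hr.upperRatios_nonempty y) (bddBelow_upperRatios y)]
    exact csInf_le_csInf (bddBelow_upperRatios _) ((hr.upperRatios_nonempty x).add
      (hr.upperRatios_nonempty y)) (Set.add_subset_iff.2 fun _ ht _ hu =>
        hr.add_mem_upperRatios ht hu)
  · rw [hr.realValue_eq_sSup_lowerRatios htot, hr.realValue_eq_sSup_lowerRatios htot,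
      hr.realValue_eq_sSup_lowerRatios htot, ← csSup_add ⟨0, hr.zero_mem_lowerRatios x⟩
      (hr.bddAbove_lowerRatios x) ⟨0, hr.zero_mem_lowerRatios y⟩ (hr.bddAbove_lowerRatios y)]
    exact csSup_le_csSup (hr.bddAbove_lowerRatios _)
      ⟨_, Set.add_mem_add (hr.zero_mem_lowerRatios x) (hr.zero_mem_lowerRatios y)⟩
      (Set.add_subset_iff.2 fun _ ht _ hu => hr.flip.add_mem_upperRatios ht hu)

lemma realValue_mul (hr : IsStrassenPreorder r) (htot : ∀ x y, r x y ∨ r y x) (x y : R) :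
    realValue r (x * y) = realValue r x * realValue r y := by
  refine le_antisymm (le_mul_of_forall_lt₀ fun a ha b hb => ?_)
    (mul_le_of_forall_lt_of_nonneg (hr.realValue_nonneg x) (hr.realValue_nonneg _)
      fun a ha hax b hb hby => ?_)
  · obtain ⟨t, ht, hta⟩ := exists_lt_of_csInf_lt (hr.upperRatios_nonempty x) ha
    obtain ⟨u, hu, hub⟩ := exists_lt_of_csInf_lt (hr.upperRatios_nonempty y) hb
    exact (realValue_le (hr.mul_mem_upperRatios ht hu)).trans (mul_le_mul hta.le hub.le
      (nonneg_of_mem_upperRatios hu) (ha.le.trans' (hr.realValue_nonneg x)))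
  · rw [hr.realValue_eq_sSup_lowerRatios htot] at hax hby
    obtain ⟨t, ht, hat⟩ := exists_lt_of_lt_csSup ⟨0, hr.zero_mem_lowerRatios x⟩ hax
    obtain ⟨u, hu, hbu⟩ := exists_lt_of_lt_csSup ⟨0, hr.zero_mem_lowerRatios y⟩ hby
    exact (mul_le_mul hat.le hbu.le hb (ha.trans hat.le)).trans
      (hr.le_realValue (hr.flip.mul_mem_upperRatios ht hu))

noncomputable def toRingHom (hr : IsStrassenPreorder r) (htot : ∀ x y, r x y ∨ r y x) :
    R →+* ℝ where
  toFun := realValue r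
  map_one' := by simpa using hr.realValue_natCast 1
  map_mul' := hr.realValue_mul htot
  map_zero' := by simpa using hr.realValue_natCast 0
  map_add' := hr.realValue_add htot

lemma exists_ringHom (hr : IsStrassenPreorder r) : ∃ φ : R →+* ℝ, ∀ ⦃x y⦄, r x y → φ x ≤ φ y := by
  obtain ⟨s, hs, hrs, htot⟩ := hr.exists_total
  exact ⟨hs.toRingHom htot, fun _ _ h => hs.realValue_mono (hrs h)⟩

end IsStrassenPreorder

end StrassenPreorder

section Graphs

variable {α β γ : Type*} {G : SimpleGraph α} {H : SimpleGraph β}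

@[simp] lemma graphJoin_adj_inl_inl {a a' : α} :
    (graphJoin G H).Adj (.inl a) (.inl a') ↔ G.Adj a a' := Iff.rfl

@[simp] lemma graphJoin_adj_inr_inr {b b' : β} :
    (graphJoin G H).Adj (.inr b) (.inr b') ↔ H.Adj b b' := Iff.rfl

@[simp] lemma graphJoin_adj_inl_inr {a : α} {b : β} : (graphJoin G H).Adj (.inl a) (.inr b) :=
  trivial

@[simp] lemma graphJoin_adj_inr_inl {a : α} {b : β} : (graphJoin G H).Adj (.inr b) (.inl a) :=
  trivial

@[simp] lemma disjProd_adj {p q : α × β} :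
    (disjProd G H).Adj p q ↔ G.Adj p.1 q.1 ∨ H.Adj p.2 q.2 := Iff.rfl

@[simp] lemma disjPow_adj {n : ℕ} {f g : Fin n → α} :
    (disjPow G n).Adj f g ↔ ∃ i, G.Adj (f i) (g i) := Iff.rfl

def graphJoinMap {G' : SimpleGraph γ} {δ : Type*} {H' : SimpleGraph δ} (f : G →g G')
    (g : H →g H') : graphJoin G H →g graphJoin G' H' where
  toFun := Sum.map f g
  map_rel' := by rintro (a | b) (a' | b') h <;> simp_all [f.map_adj, g.map_adj]

def disjProdMap {G' : SimpleGraph γ} {δ : Type*} {H' : SimpleGraph δ} (f : G →g G')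
    (g : H →g H') : disjProd G H →g disjProd G' H' where
  toFun := Prod.map f g
  map_rel' := by rintro p q (h | h) <;> simp [f.map_adj, g.map_adj, h]

def graphJoinComm : graphJoin G H ≃g graphJoin H G where
  toEquiv := Equiv.sumComm α β
  map_rel_iff' := by rintro (a | b) (a' | b') <;> simp

def graphJoinAssoc {K : SimpleGraph γ} :
    graphJoin (graphJoin G H) K ≃g graphJoin G (graphJoin H K) where
  toEquiv := Equiv.sumAssoc α β γ
  map_rel_iff' := by rintro ((a | b) | c) ((a' | b') | c') <;> simp

def graphJoinTopFinZero : graphJoin G (⊤ : SimpleGraph (Fin 0)) ≃g G where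
  toEquiv := Equiv.sumEmpty α (Fin 0)
  map_rel_iff' := by rintro (a | ⟨_, ⟨⟩⟩) (a' | ⟨_, ⟨⟩⟩); simp

def graphJoinTopFin (m n : ℕ) :
    graphJoin (⊤ : SimpleGraph (Fin m)) (⊤ : SimpleGraph (Fin n)) ≃g
      (⊤ : SimpleGraph (Fin (m + n))) where
  toEquiv := finSumFinEquiv
  map_rel_iff' := by rintro (a | b) (a' | b') <;> simp [Fin.ext_iff] <;> omega

def disjProdComm : disjProd G H ≃g disjProd H G where
  toEquiv := Equiv.prodComm α β
  map_rel_iff' := by simp [or_comm]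

def disjProdAssoc {K : SimpleGraph γ} :
    disjProd (disjProd G H) K ≃g disjProd G (disjProd H K) where
  toEquiv := Equiv.prodAssoc α β γ
  map_rel_iff' := by simp [or_assoc]

def topFinOneDisjProd : disjProd (⊤ : SimpleGraph (Fin 1)) G ≃g G where
  toEquiv := Equiv.uniqueProd α (Fin 1)
  map_rel_iff' := by simp [Subsingleton.elim _ (0 : Fin 1)]

def graphJoinDisjProdDistrib {K : SimpleGraph γ} :
    disjProd (graphJoin G H) K ≃g graphJoin (disjProd G K) (disjProd H K) where
  toEquiv := Equiv.sumProdDistrib α β γ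
  map_rel_iff' := by rintro ⟨a | b, c⟩ ⟨a' | b', c'⟩ <;> simp

def disjPowSucc (n : ℕ) : disjPow G (n + 1) ≃g disjProd G (disjPow G n) where
  toEquiv := (Fin.consEquiv fun _ => α).symm
  map_rel_iff' := by simp [Fin.exists_fin_succ, Fin.tail]

end Graphs

namespace SimpleGraph

variable {α β : Type*} {G : SimpleGraph α} {H : SimpleGraph β}

lemma nonempty_top_hom_top_iff {m n : ℕ} :
    Nonempty ((⊤ : SimpleGraph (Fin m)) →g (⊤ : SimpleGraph (Fin n))) ↔ m ≤ n :=
  ⟨fun ⟨f⟩ => by simpa using Fintype.card_le_of_injective f f.injective_of_top_hom,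
    fun h => ⟨(Embedding.completeGraph (Fin.castLEEmb h)).toHom⟩⟩

lemma le_cliqueNum_iff [Finite α] {n : ℕ} :
    n ≤ G.cliqueNum ↔ Nonempty ((⊤ : SimpleGraph (Fin n)) →g G) := by
  classical
  refine ⟨fun h => ?_, fun ⟨f⟩ => ?_⟩
  · obtain ⟨s, hs⟩ := G.exists_isNClique_cliqueNum
    exact ⟨(topEmbeddingOfNotCliqueFree hs.not_cliqueFree).toHom.comp
      (Embedding.completeGraph (Fin.castLEEmb h)).toHom⟩
  · have hcl : G.IsClique (Finset.univ.image f : Set α) := by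
      rw [Finset.coe_image]
      rintro _ ⟨i, -, rfl⟩ _ ⟨j, -, rfl⟩ hij
      exact f.map_adj fun h => hij (h ▸ rfl)
    simpa [Finset.card_image_of_injective _ f.injective_of_top_hom] using
      hcl.card_le_cliqueNum

lemma cliqueNum_le_of_hom [Finite α] [Finite β] (f : G →g H) : G.cliqueNum ≤ H.cliqueNum :=
  le_cliqueNum_iff.2 ((le_cliqueNum_iff.1 le_rfl).map f.comp)

lemma cliqueNum_top_fin (n : ℕ) : (⊤ : SimpleGraph (Fin n)).cliqueNum = n :=
  eq_of_forall_le_iff fun _ => by rw [le_cliqueNum_iff, nonempty_top_hom_top_iff]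

lemma cliqueNum_graphJoin [Finite α] [Finite β] :
    (graphJoin G H).cliqueNum = G.cliqueNum + H.cliqueNum := by
  classical
  refine le_antisymm ?_ ?_
  · obtain ⟨u, hu⟩ := (graphJoin G H).exists_isNClique_cliqueNum
    have hl : G.IsClique (u.toLeft : Set α) := fun a ha a' ha' h =>
      hu.isClique (x := .inl a) (y := .inl a') (by simpa using ha) (by simpa using ha')
        (by simpa using h)
    have hr : H.IsClique (u.toRight : Set β) := fun b hb b' hb' h =>
      hu.isClique (x := .inr b) (y := .inr b') (by simpa using hb) (by simpa using hb')
        (by simpa using h)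
    rw [← hu.card_eq, ← Finset.card_toLeft_add_card_toRight]
    exact add_le_add (hl.card_le_cliqueNum) (hr.card_le_cliqueNum)
  · obtain ⟨s, hs⟩ := G.exists_isNClique_cliqueNum
    obtain ⟨t, ht⟩ := H.exists_isNClique_cliqueNum
    have hst : (graphJoin G H).IsClique (s.disjSum t : Set (α ⊕ β)) := by
      rintro (a | b) hx (a' | b') hy hne <;> simp only [Finset.mem_coe, Finset.inl_mem_disjSum,
        Finset.inr_mem_disjSum] at hx hy <;> simp only [graphJoin_adj_inl_inl,
        graphJoin_adj_inr_inr, graphJoin_adj_inl_inr, graphJoin_adj_inr_inl]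
      · exact hs.isClique hx hy fun h => hne (h ▸ rfl)
      · exact ht.isClique hx hy fun h => hne (h ▸ rfl)
    simpa [hs.card_eq, ht.card_eq] using hst.card_le_cliqueNum

end SimpleGraph

structure FinGraph where
  V : Type
  [fintype : Fintype V]
  G : SimpleGraph V

attribute [instance] FinGraph.fintype

namespace FinGraph

instance : Preorder FinGraph where
  le X Y := Nonempty (X.G →g Y.G)
  le_refl X := ⟨.id⟩
  le_trans _ _ _ := fun ⟨f⟩ ⟨g⟩ => ⟨g.comp f⟩

instance : Add FinGraph := ⟨fun X Y => ⟨X.V ⊕ Y.V, graphJoin X.G Y.G⟩⟩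

instance : Mul FinGraph := ⟨fun X Y => ⟨X.V × Y.V, disjProd X.G Y.G⟩⟩

def complete (n : ℕ) : FinGraph := ⟨Fin n, ⊤⟩

variable {X Y X' Y' : FinGraph}

lemma le_of_isEmpty [IsEmpty X.V] : X ≤ Y := ⟨⟨isEmptyElim, fun {a} => isEmptyElim a⟩⟩

lemma complete_zero_le : complete 0 ≤ X := ⟨⟨Fin.elim0, fun {a} => a.elim0⟩⟩

lemma antisymmRel_of_iso (e : X.G ≃g Y.G) : AntisymmRel (· ≤ ·) X Y :=
  ⟨⟨e.toHom⟩, ⟨e.symm.toHom⟩⟩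

lemma add_le_add : X ≤ X' → Y ≤ Y' → X + Y ≤ X' + Y' := fun ⟨f⟩ ⟨g⟩ => ⟨graphJoinMap f g⟩

lemma mul_le_mul : X ≤ X' → Y ≤ Y' → X * Y ≤ X' * Y' := fun ⟨f⟩ ⟨g⟩ => ⟨disjProdMap f g⟩

end FinGraph

def GraphSemiring : Type 1 := Antisymmetrization FinGraph (· ≤ ·)

namespace GraphSemiring

instance : PartialOrder GraphSemiring := inferInstanceAs (PartialOrder (Antisymmetrization _ _))

def mk (X : FinGraph) : GraphSemiring := toAntisymmetrization (· ≤ ·) X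

@[elab_as_elim]
lemma ind {p : GraphSemiring → Prop} (h : ∀ X, p (mk X)) (x : GraphSemiring) : p x :=
  Antisymmetrization.ind _ h x

lemma mk_eq_mk_of_iso {X Y : FinGraph} (e : X.G ≃g Y.G) : mk X = mk Y :=
  Quotient.sound (FinGraph.antisymmRel_of_iso e)

instance : Add GraphSemiring :=
  ⟨Quotient.map₂ (· + ·) fun _ _ h _ _ h' =>
    ⟨FinGraph.add_le_add h.1 h'.1, FinGraph.add_le_add h.2 h'.2⟩⟩

instance : Mul GraphSemiring :=
  ⟨Quotient.map₂ (· * ·) fun _ _ h _ _ h' =>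
    ⟨FinGraph.mul_le_mul h.1 h'.1, FinGraph.mul_le_mul h.2 h'.2⟩⟩

instance : Zero GraphSemiring := ⟨mk (.complete 0)⟩

lemma mk_eq_zero_of_isEmpty {X : FinGraph} (hX : IsEmpty X.V) : mk X = 0 :=
  le_antisymm FinGraph.le_of_isEmpty FinGraph.complete_zero_le

instance : One GraphSemiring := ⟨mk (.complete 1)⟩

instance : NatCast GraphSemiring := ⟨fun n => mk (.complete n)⟩

instance : CommSemiring GraphSemiring where
  natCast_zero := rfl
  natCast_succ n := (mk_eq_mk_of_iso (graphJoinTopFin n 1)).symm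
  nsmul := nsmulRec
  npow := npowRec
  add_assoc := ind fun X => ind fun Y => ind fun Z =>
    mk_eq_mk_of_iso (X := X + Y + Z) (Y := X + (Y + Z)) graphJoinAssoc
  add_comm := ind fun X => ind fun Y => mk_eq_mk_of_iso (X := X + Y) (Y := Y + X) graphJoinComm
  zero_add := ind fun X =>
    (mk_eq_mk_of_iso (X := FinGraph.complete 0 + X) (Y := X + FinGraph.complete 0)
      graphJoinComm).trans (mk_eq_mk_of_iso (X := X + FinGraph.complete 0) graphJoinTopFinZero)
  add_zero := ind fun X => mk_eq_mk_of_iso (X := X + FinGraph.complete 0) graphJoinTopFinZero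
  mul_assoc := ind fun X => ind fun Y => ind fun Z =>
    mk_eq_mk_of_iso (X := X * Y * Z) (Y := X * (Y * Z)) disjProdAssoc
  mul_comm := ind fun X => ind fun Y => mk_eq_mk_of_iso (X := X * Y) (Y := Y * X) disjProdComm
  one_mul := ind fun X => mk_eq_mk_of_iso (X := FinGraph.complete 1 * X) topFinOneDisjProd
  mul_one := ind fun X =>
    (mk_eq_mk_of_iso (X := X * FinGraph.complete 1) (Y := FinGraph.complete 1 * X)
      disjProdComm).trans (mk_eq_mk_of_iso (X := FinGraph.complete 1 * X) topFinOneDisjProd)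
  zero_mul := ind fun X => mk_eq_zero_of_isEmpty (inferInstanceAs (IsEmpty (Fin 0 × X.V)))
  mul_zero := ind fun X => mk_eq_zero_of_isEmpty (inferInstanceAs (IsEmpty (X.V × Fin 0)))
  left_distrib := ind fun X => ind fun Y => ind fun Z =>
    (mk_eq_mk_of_iso (X := X * (Y + Z)) (Y := (Y + Z) * X) disjProdComm).trans <|
      (mk_eq_mk_of_iso (X := (Y + Z) * X) (Y := Y * X + Z * X) graphJoinDisjProdDistrib).trans <|
        congr_arg₂ (· + ·) (mk_eq_mk_of_iso (X := Y * X) (Y := X * Y) disjProdComm)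
          (mk_eq_mk_of_iso (X := Z * X) (Y := X * Z) disjProdComm)
  right_distrib := ind fun X => ind fun Y => ind fun Z =>
    mk_eq_mk_of_iso (X := (X + Y) * Z) (Y := X * Z + Y * Z) graphJoinDisjProdDistrib

lemma one_le_mk {X : FinGraph} [Nonempty X.V] : 1 ≤ mk X :=
  ⟨⟨fun _ => Classical.arbitrary X.V, fun h => absurd (Subsingleton.elim (α := Fin 1) _ _) h.ne⟩⟩

lemma mk_le_one {X : FinGraph} [Subsingleton X.V] : mk X ≤ 1 :=
  ⟨⟨fun _ => (0 : Fin 1), fun h => absurd (Subsingleton.elim _ _) h.ne⟩⟩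

def of {V : Type} [Fintype V] (G : SimpleGraph V) : GraphSemiring := mk ⟨V, G⟩

lemma of_disjPow {V : Type} [Fintype V] (G : SimpleGraph V) (n : ℕ) :
    of (disjPow G n) = of G ^ n := by
  induction n with
  | zero => exact le_antisymm mk_le_one one_le_mk
  | succ n ih => rw [pow_succ', ← ih]; exact mk_eq_mk_of_iso (disjPowSucc n)

lemma isSemiringPreorder_le : IsSemiringPreorder (fun x y : GraphSemiring => x ≤ y) where
  refl := le_refl
  trans := le_trans
  add_right {x y} z h := by
    induction x using ind; induction y using ind; induction z using ind
    exact FinGraph.add_le_add h le_rfl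
  mul_right {x y} z h := by
    induction x using ind; induction y using ind; induction z using ind
    exact FinGraph.mul_le_mul h le_rfl

lemma isStrassenPreorder_le : IsStrassenPreorder (fun x y : GraphSemiring => x ≤ y) where
  toIsSemiringPreorder := isSemiringPreorder_le
  zero_le := ind fun _ => FinGraph.complete_zero_le
  one_le {x} hx := by
    induction x using ind with | h X =>
    obtain hX | hX := isEmpty_or_nonempty X.V
    · exact absurd (mk_eq_zero_of_isEmpty hX) hx
    · exact one_le_mk
  exists_le_natCast x := by
    induction x using ind with | h X =>
    exact ⟨Fintype.card X.V,
      ⟨⟨Fintype.equivFin X.V, fun h => (Fintype.equivFin X.V).injective.ne h.ne⟩⟩⟩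
  le_of_natCast h := nonempty_top_hom_top_iff.1 h

noncomputable def cliqueNum : GraphSemiring →+ ℕ where
  toFun := Quotient.lift (s := AntisymmRel.setoid FinGraph (· ≤ ·)) (fun X => X.G.cliqueNum)
    fun _ _ h => le_antisymm (cliqueNum_le_of_hom h.1.some) (cliqueNum_le_of_hom h.2.some)
  map_zero' := cliqueNum_top_fin 0
  map_add' := ind fun _ => ind fun _ => cliqueNum_graphJoin

lemma cliqueNum_mono : Monotone cliqueNum := by
  intro x y h
  induction x using ind; induction y using ind
  exact cliqueNum_le_of_hom h.some

lemma cliqueNum_natCast (n : ℕ) : cliqueNum n = n := cliqueNum_top_fin n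

lemma cliqueNum_natCast_mul (n : ℕ) (x : GraphSemiring) :
    cliqueNum (n * x) = n * cliqueNum x := by
  rw [← nsmul_eq_mul, map_nsmul, smul_eq_mul]

lemma natCast_cliqueNum_le (x : GraphSemiring) : (cliqueNum x : GraphSemiring) ≤ x := by
  induction x using ind
  exact le_cliqueNum_iff.1 le_rfl

/-- Apply the additive and monotone clique number to the telescoped inequality: the extra copy
of `m ^ t + T` on the left has to be paid for by `c * h ^ (t + 1)` on the right. -/
lemma pow_le_mul_cliqueNum_pow {q m N : ℕ} {c h : GraphSemiring}
    (hc : (q : GraphSemiring) + 1 + c * m ≤ q + c * h) (hN : c ≤ N) (t : ℕ) :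
    m ^ t ≤ N * cliqueNum (h ^ (t + 1)) := by
  obtain ⟨T, J, hTJ⟩ := isSemiringPreorder_le.telescope hc t
  have hω := cliqueNum_mono hTJ
  rw [← Nat.cast_succ, ← Nat.cast_pow] at hω
  simp only [map_add, cliqueNum_natCast_mul, cliqueNum_natCast] at hω
  have hcN : cliqueNum (c * h ^ (t + 1)) ≤ N * cliqueNum (h ^ (t + 1)) := by
    rw [← cliqueNum_natCast_mul]
    exact cliqueNum_mono (isSemiringPreorder_le.mul_right _ hN)
  linarith

lemma exists_monotone_ringHom_le_natCast (h : GraphSemiring) {m : ℕ} {ρ : ℝ} (hρm : ρ < m)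
    (hω : ∀ s, (cliqueNum (h ^ s) : ℝ) ≤ ρ ^ s) :
    ∃ φ : GraphSemiring →+* ℝ, Monotone φ ∧ φ h ≤ m := by
  rcases isStrassenPreorder_le.isStrassenPreorder_adjoin_or h m with hs | ⟨q, c, hc⟩
  · obtain ⟨φ, hφ⟩ := hs.exists_ringHom
    exact ⟨φ, fun x y hxy => hφ (le_adjoin _ _ hxy),
      by simpa using hφ (isSemiringPreorder_le.adjoin_self h m)⟩
  obtain ⟨N, hN⟩ := isStrassenPreorder_le.exists_le_natCast c
  have hρ : 0 ≤ ρ := by simpa using (Nat.cast_nonneg _).trans (hω 1)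
  obtain ⟨t, ht⟩ := exists_mul_pow_lt_pow (N * ρ) hρ hρm
  have hmt : ((m ^ t : ℕ) : ℝ) ≤ N * cliqueNum (h ^ (t + 1)) := by
    exact_mod_cast pow_le_mul_cliqueNum_pow hc hN t
  have := hmt.trans (mul_le_mul_of_nonneg_left (hω (t + 1)) (Nat.cast_nonneg N))
  push_cast at this
  exact (ht.not_ge (this.trans_eq (by ring))).elim

end GraphSemiring

namespace SRInvariant

open GraphSemiring

noncomputable def toRingHom (η : SRInvariant) : GraphSemiring →+* ℝ :=
  let f : GraphSemiring → ℝ := Quotient.lift (s := AntisymmRel.setoid FinGraph (· ≤ ·))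
    (fun X => η.eta X.G) fun _ _ h => le_antisymm (η.eta_mono _ _ h.1) (η.eta_mono _ _ h.2)
  have f_add : ∀ x y, f (x + y) = f x + f y := ind fun _ => ind fun _ => η.eta_add _ _
  { toFun := f
    map_one' := η.eta_one
    map_mul' := ind fun _ => ind fun _ => η.eta_mul _ _
    map_zero' := by
      have := congr_arg f (add_zero (0 : GraphSemiring))
      rw [f_add] at this
      linarith
    map_add' := f_add }

lemma monotone_toRingHom (η : SRInvariant) : Monotone η.toRingHom := by
  intro x y h
  induction x using ind; induction y using ind
  exact η.eta_mono _ _ h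

def ofRingHom (φ : GraphSemiring →+* ℝ) (hφ : Monotone φ) : SRInvariant where
  eta G := φ (of G)
  eta_one := map_one φ
  eta_mono _ _ h := hφ h
  eta_add G H := map_add φ (of G) (of H)
  eta_mul G H := map_mul φ (of G) (of H)

variable {V : Type} [Fintype V]

lemma eta_nonneg (η : SRInvariant) (G : SimpleGraph V) : 0 ≤ η.eta G :=
  (map_zero η.toRingHom).symm.trans_le
    (η.monotone_toRingHom (isStrassenPreorder_le.zero_le (of G)))

lemma cliqueNum_disjPow_le (η : SRInvariant) (G : SimpleGraph V) (n : ℕ) :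
    ((disjPow G n).cliqueNum : ℝ) ≤ η.eta G ^ n :=
  calc ((disjPow G n).cliqueNum : ℝ)
      = η.toRingHom (cliqueNum (of (disjPow G n))) := (map_natCast _ _).symm
    _ ≤ η.toRingHom (of (disjPow G n)) := η.monotone_toRingHom (natCast_cliqueNum_le _)
    _ = η.eta G ^ n := by rw [of_disjPow, map_pow]; rfl

lemma rpow_cliqueNum_disjPow_le (η : SRInvariant) (G : SimpleGraph V) {n : ℕ} (hn : 1 ≤ n) :
    ((disjPow G n).cliqueNum : ℝ) ^ ((1 : ℝ) / n) ≤ η.eta G := by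
  rw [one_div, Real.rpow_inv_le_iff_of_pos (by positivity) (η.eta_nonneg G) (by positivity),
    Real.rpow_natCast]
  exact η.cliqueNum_disjPow_le G n

end SRInvariant

section Capacity

open GraphSemiring

variable {V : Type} [Fintype V]

lemma cliqueNum_disjPow_le_pow (G : SimpleGraph V) {θ : ℝ} (hθ0 : 0 ≤ θ)
    (hθ : ∀ n, 1 ≤ n → ((disjPow G n).cliqueNum : ℝ) ^ ((1 : ℝ) / n) ≤ θ) (n : ℕ) :
    ((disjPow G n).cliqueNum : ℝ) ≤ θ ^ n := by
  rcases n.eq_zero_or_pos with rfl | hn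
  · have h : cliqueNum (of (disjPow G 0)) = 1 := by
      rw [of_disjPow, pow_zero, ← Nat.cast_one, cliqueNum_natCast]
    rw [pow_zero]
    exact_mod_cast (h.le : (disjPow G 0).cliqueNum ≤ 1)
  · have := hθ n hn
    rwa [one_div, Real.rpow_inv_le_iff_of_pos (by positivity) hθ0 (by positivity),
      Real.rpow_natCast] at this

/-- Adjoin `b * G ≤ a` to the homomorphism order for a fraction `θ < a / b < t`. -/
lemma exists_srInvariant_eta_lt (G : SimpleGraph V) {θ t : ℝ} (hθ0 : 0 ≤ θ)
    (hθ : ∀ n, 1 ≤ n → ((disjPow G n).cliqueNum : ℝ) ^ ((1 : ℝ) / n) ≤ θ) (ht : θ < t) :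
    ∃ η : SRInvariant, η.eta G < t := by
  obtain ⟨a, b, hb, hθab, habt⟩ := exists_natCast_div_mem_Ioo hθ0 ht
  have hω : ∀ s, (cliqueNum (((b : GraphSemiring) * of G) ^ s) : ℝ) ≤ (b * θ) ^ s := by
    intro s
    rw [mul_pow, ← Nat.cast_pow, cliqueNum_natCast_mul, ← of_disjPow, mul_pow]
    push_cast
    exact mul_le_mul_of_nonneg_left (cliqueNum_disjPow_le_pow G hθ0 hθ s) (by positivity)
  obtain ⟨φ, hφ, hφb⟩ := exists_monotone_ringHom_le_natCast _
    (by rwa [lt_div_iff₀ (by positivity), mul_comm] at hθab) hω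
  rw [map_mul, map_natCast, mul_comm, ← le_div_iff₀ (by positivity)] at hφb
  exact ⟨.ofRingHom φ hφ, hφb.trans_lt habt⟩

end Capacity

theorem shannonCapacity_eq_inf_invariants_general {V : Type} [Fintype V]
    (G : SimpleGraph V) :
    sSup {x : ℝ | ∃ n : ℕ, 1 ≤ n ∧
        x = (SimpleGraph.cliqueNum (disjPow G n) : ℝ) ^ ((1 : ℝ) / n)}
      = sInf {x : ℝ | ∃ η : SRInvariant, x = η.eta G} := by
  set S := {x : ℝ | ∃ n : ℕ, 1 ≤ n ∧ x = ((disjPow G n).cliqueNum : ℝ) ^ ((1 : ℝ) / n)}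
  have hS : ∀ η : SRInvariant, ∀ s ∈ S, s ≤ η.eta G := by
    rintro η _ ⟨n, hn, rfl⟩
    exact η.rpow_cliqueNum_disjPow_le G hn
  obtain ⟨φ, hφ⟩ := GraphSemiring.isStrassenPreorder_le.exists_ringHom
  let η₀ : SRInvariant := .ofRingHom φ fun _ _ h => hφ h
  have hSbdd : BddAbove S := ⟨η₀.eta G, hS η₀⟩
  have hθ0 : 0 ≤ sSup S := le_csSup_of_le hSbdd ⟨1, le_rfl, rfl⟩ (by positivity)
  refine le_antisymm (le_csInf ⟨_, η₀, rfl⟩ ?_) (le_of_forall_gt fun t ht => ?_)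
  · rintro _ ⟨η, rfl⟩
    exact csSup_le ⟨_, 1, le_rfl, rfl⟩ (hS η)
  · obtain ⟨η, hη⟩ :=
      exists_srInvariant_eta_lt G hθ0 (fun n hn => le_csSup hSbdd ⟨n, hn, rfl⟩) ht
    exact csInf_lt_of_lt ⟨0, by rintro _ ⟨η, rfl⟩; exact η.eta_nonneg G⟩ ⟨η, rfl⟩ hη

/-- Zuiddam's theorem: the complementary Shannon capacity
`Θ(Ḡ) = sup_{n ≥ 1} ω(G^{*n})^{1/n}` equals the infimum of `η(G)` over all
semiring-homomorphic graph invariants `η`. -/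
theorem shannonCapacity_eq_inf_invariants {V : Type} [Fintype V] [Nonempty V]
    (G : SimpleGraph V) :
    sSup {x : ℝ | ∃ n : ℕ, 1 ≤ n ∧
        x = (SimpleGraph.cliqueNum (disjPow G n) : ℝ) ^ ((1 : ℝ) / n)}
      = sInf {x : ℝ | ∃ η : SRInvariant, x = η.eta G} :=
  shannonCapacity_eq_inf_invariants_general G
end

section
/- Let 𝔽 be a field and n ∈ ℕ. Then the graph F_n (defined below) contains a clique of size n but no clique of size n + 1; that is, its clique number equals n. (The n pairwise adjacent vertices can be taken to be the pairs (e_i, e_i) of standard basis vectors; conversely, in any clique {(x_1,y_1),…,(x_k,y_k)} the vectors x_1,…,x_k are linearly independent, forcing k ≤ n.) -/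
open SimpleGraph

universe u

/-- The graph `F_n` associated to a field `𝔽`: vertices are pairs of vectors with
dot product `1`, adjacent iff the two cross dot products both vanish. -/
def pairingGraph (𝔽 : Type u) [Field 𝔽] (n : ℕ) :
    SimpleGraph {p : (Fin n → 𝔽) × (Fin n → 𝔽) // ∑ i, p.1 i * p.2 i = 1} where
  Adj x y := (∑ i, x.val.1 i * y.val.2 i = 0) ∧ (∑ i, y.val.1 i * x.val.2 i = 0)
  symm := ⟨fun x y h => ⟨h.2, h.1⟩⟩
  loopless := ⟨fun x h => one_ne_zero (x.property.symm.trans h.1)⟩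

/-! The pairs `(eᵢ, eᵢ)` of standard basis vectors form an `n`-clique, and in any
clique `{(xₖ, yₖ)}` the `yₖ` are a dual family to the `xₖ`, so the `xₖ` are linearly
independent in `𝔽ⁿ` and there are at most `n` of them. -/

open Matrix

theorem linearIndependent_of_pairwise_dotProduct_eq_zero_one {R m ι : Type*} [CommRing R]
    [Fintype m] (x y : ι → m → R) (h0 : Pairwise fun i j ↦ x i ⬝ᵥ y j = 0)
    (h1 : ∀ i, x i ⬝ᵥ y i = 1) : LinearIndependent R x :=
  .of_pairwise_dual_eq_zero_one x (fun i ↦ (dotProductBilin R R).flip (y i))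
    (fun _ _ hij ↦ h0 hij.symm) h1

namespace pairingGraph

variable (𝔽 : Type u) [Field 𝔽] (n : ℕ)

def stdBasisCopy : Copy (⊤ : SimpleGraph (Fin n)) (pairingGraph 𝔽 n) where
  toHom :=
    { toFun i := ⟨(Pi.single i 1, Pi.single i 1),
        show Pi.single i (1 : 𝔽) ⬝ᵥ Pi.single i 1 = 1 by simp⟩
      map_rel' {i j} (hij : i ≠ j) := by
        change Pi.single i (1 : 𝔽) ⬝ᵥ Pi.single j 1 = 0 ∧ Pi.single j (1 : 𝔽) ⬝ᵥ Pi.single i 1 = 0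
        simp [hij, hij.symm] }
  injective' i j hij := by
    simpa [Pi.single_apply, eq_comm] using congr_arg (fun v ↦ v.val.1 j) hij

theorem cliqueFree : (pairingGraph 𝔽 n).CliqueFree (n + 1) := by
  intro s hs
  have hindep : LinearIndependent 𝔽 fun v : s ↦ v.val.val.1 :=
    linearIndependent_of_pairwise_dotProduct_eq_zero_one _ (fun v : s ↦ v.val.val.2)
      (fun v w hvw ↦ (hs.isClique v.2 w.2 (Subtype.coe_injective.ne hvw)).1)
      (fun v ↦ v.val.2)
  have := hindep.fintype_card_le_finrank
  simp only [Fintype.card_coe, hs.card_eq, Module.finrank_fin_fun] at this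
  omega

end pairingGraph

/-- The graph `F_n` has clique number exactly `n`: it contains a clique of size `n`
but no clique of size `n + 1`. -/
theorem pairingGraph_cliqueNum (𝔽 : Type u) [Field 𝔽] (n : ℕ) :
    (∃ s : Finset {p : (Fin n → 𝔽) × (Fin n → 𝔽) // ∑ i, p.1 i * p.2 i = 1},
        (pairingGraph 𝔽 n).IsNClique n s) ∧
      ∀ s : Finset {p : (Fin n → 𝔽) × (Fin n → 𝔽) // ∑ i, p.1 i * p.2 i = 1},
        ¬ (pairingGraph 𝔽 n).IsNClique (n + 1) s :=
  ⟨⟨_, by simpa using isNClique_map_copy_top (pairingGraph.stdBasisCopy 𝔽 n)⟩,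
    pairingGraph.cliqueFree 𝔽 n⟩
end
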